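/- arXiv:1606.03557 — 2 statements merged into one kernel-verified Lean document; each statement's English description precedes it below -/
import Mathlib

section
/- For every ρ ∈ (0,1] and natural number r ≤ N, there exists a set 𝒩 of r-sparse unit vectors in ℝ^N such that for every r-sparse unit vector x there is y ∈ 𝒩 with supp(y) ⊆ supp(x) and ‖x−y‖ ≤ ρ, and |𝒩| ≤ (C N/(ρ r))^r for some universal constant C > 0. -/
/-!
For a fixed support `S` with `|S| ≤ r`, the unit vectors supported in `S` form the unit sphere of
an `|S|`-dimensional space, which a maximal `ρ`-separated set covers; disjointness of the balls of
radius `ρ / 2` around its points bounds its size by `(1 + 2/ρ)^|S| ≤ (3/ρ)^r`. Taking the union of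
these nets over all `∑_{k ≤ r} (N choose k) ≤ (e N / r)^r` supports gives the bound with
`C = 3e < 9`; supports are preserved because each `x` is approximated in the net of its own
support.
-/

open Metric Module Finset MeasureTheory
open scoped NNReal ENNReal

namespace Metric

variable {E : Type*} [NormedAddCommGroup E] [NormedSpace ℝ E] [FiniteDimensional ℝ E]
  {ε : ℝ≥0} {x : E} {R : ℝ}

theorem IsSeparated.card_le_of_subset_closedBall (hε : 0 < ε) (hR : 0 ≤ R) {C : Finset E}
    (hC : (C : Set E) ⊆ closedBall x R) (hsep : IsSeparated ε (C : Set E)) :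
    (C.card : ℝ) ≤ (1 + 2 * R / ε) ^ finrank ℝ E := by
  borelize E
  set μ : Measure E := Measure.addHaar
  set n := finrank ℝ E
  have hε' : (0 : ℝ) < ε := hε
  have hdisj : (C : Set E).PairwiseDisjoint (ball · (ε / 2)) := fun y hy z hz hyz => by
    refine ball_disjoint_ball ?_
    have : (ε : ℝ≥0∞) < edist y z := hsep hy hz hyz
    rw [edist_nndist, ENNReal.coe_lt_coe, ← NNReal.coe_lt_coe, coe_nndist] at this
    linarith
  have hunion : (⋃ y ∈ C, ball y (ε / 2)) ⊆ ball x (R + ε / 2) := by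
    simp only [Set.iUnion_subset_iff]
    exact fun y hy => ball_subset_ball' (by linarith [mem_closedBall.1 (hC hy)])
  have hvol : (C.card : ℝ≥0∞) * (ENNReal.ofReal ((ε / 2) ^ n) * μ (ball 0 1))
      ≤ ENNReal.ofReal ((R + ε / 2) ^ n) * μ (ball 0 1) := calc
    _ = μ (⋃ y ∈ C, ball y (ε / 2)) := by
        rw [measure_biUnion_finset hdisj fun _ _ => measurableSet_ball, Finset.sum_congr rfl
          fun y _ => μ.addHaar_ball_of_pos y (by positivity), sum_const, nsmul_eq_mul]
    _ ≤ μ (ball x (R + ε / 2)) := measure_mono hunion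
    _ = _ := μ.addHaar_ball_of_pos x (by positivity)
  rw [← mul_assoc, ENNReal.mul_le_mul_iff_left (measure_ball_pos μ _ one_pos).ne'
    measure_ball_lt_top.ne, ← ENNReal.ofReal_natCast, ← ENNReal.ofReal_mul (by positivity),
    ENNReal.ofReal_le_ofReal_iff (by positivity), ← le_div_iff₀ (by positivity), ← div_pow] at hvol
  refine hvol.trans_eq (congrArg (· ^ n) ?_)
  field_simp
  ring

theorem IsSeparated.encard_le_of_subset_closedBall (hε : 0 < ε) (hR : 0 ≤ R) {C : Set E}
    (hC : C ⊆ closedBall x R) (hsep : IsSeparated ε C) :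
    C.encard ≤ ⌊(1 + 2 * R / ε) ^ finrank ℝ E⌋₊ := by
  by_contra! h
  obtain ⟨D, hDC, hD⟩ := Set.exists_subset_encard_eq (Order.add_one_le_of_lt h)
  have hDfin : D.Finite := Set.finite_of_encard_eq_coe hD
  have hcard := IsSeparated.card_le_of_subset_closedBall hε hR (C := hDfin.toFinset)
    (by simpa using hDC.trans hC) (by simpa using hsep.subset hDC)
  rw [hDfin.encard_eq_coe_toFinset_card] at hD
  norm_cast at hD
  rw [hD, Nat.cast_add_one] at hcard
  exact (Nat.lt_floor_add_one _).not_ge hcard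

theorem exists_finset_subset_isCover_card_le (hε : 0 < ε) (hR : 0 ≤ R) {A : Set E}
    (hA : A ⊆ closedBall x R) :
    ∃ C : Finset E, (C : Set E) ⊆ A ∧ IsCover ε A C ∧
      (C.card : ℝ) ≤ (1 + 2 * R / ε) ^ finrank ℝ E := by
  have hpack : packingNumber ε A ≠ ⊤ := ne_top_of_le_ne_top (ENat.natCast_ne_top _) <|
    iSup₂_le fun C hCA => iSup_le fun hsep =>
      hsep.encard_le_of_subset_closedBall hε hR (hCA.trans hA)
  have hfin : (maximalSeparatedSet ε A).Finite :=
    Set.encard_ne_top_iff.1 (encard_maximalSeparatedSet hpack ▸ hpack)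
  have hsub : (hfin.toFinset : Set E) ⊆ A := by simpa using maximalSeparatedSet_subset
  refine ⟨hfin.toFinset, hsub, by simpa using isCover_maximalSeparatedSet hpack, ?_⟩
  exact IsSeparated.card_le_of_subset_closedBall hε hR (hsub.trans hA)
    (by simpa using isSeparated_maximalSeparatedSet)

end Metric

theorem Finset.card_filter_card_le_eq_sum_choose {α : Type*} [DecidableEq α] (s : Finset α)
    (r : ℕ) : #{t ∈ s.powerset | t.card ≤ r} = ∑ k ∈ range (r + 1), s.card.choose k := by
  rw [card_eq_sum_card_fiberwise (f := Finset.card) (t := range (r + 1))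
    (fun t ht => mem_range_succ_iff.2 (mem_filter.1 ht).2)]
  refine sum_congr rfl fun k hk => ?_
  rw [← card_powersetCard, powersetCard_eq_filter, filter_filter]
  congr 1
  refine filter_congr fun t _ => ?_
  have := mem_range_succ_iff.1 hk
  constructor
  · rintro ⟨-, rfl⟩; rfl
  · rintro rfl; exact ⟨this, rfl⟩

/-- With `t = r / n`: `t ^ r ∑_{k ≤ r} (n choose k) ≤ ∑_k (n choose k) t ^ k = (1 + t) ^ n ≤ e ^ r`. -/
theorem sum_range_choose_le_exp_mul_div_pow {n r : ℕ} (hrn : r ≤ n) :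
    ∑ k ∈ range (r + 1), (n.choose k : ℝ) ≤ (Real.exp 1 * n / r) ^ r := by
  rcases Nat.eq_zero_or_pos r with rfl | hr
  · simp
  have hn : (0 : ℝ) < n := by exact_mod_cast hr.trans_le hrn
  set t : ℝ := r / n
  have ht : 0 < t := by positivity
  have ht1 : t ≤ 1 := div_le_one_of_le₀ (by exact_mod_cast hrn) (Nat.cast_nonneg n)
  have key : (∑ k ∈ range (r + 1), (n.choose k : ℝ)) * t ^ r ≤ Real.exp r := calc
    _ ≤ ∑ k ∈ range (r + 1), (n.choose k : ℝ) * t ^ k := by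
        rw [sum_mul]
        exact sum_le_sum fun k hk => mul_le_mul_of_nonneg_left
          (pow_le_pow_of_le_one ht.le ht1 (mem_range_succ_iff.1 hk)) (Nat.cast_nonneg _)
    _ ≤ ∑ k ∈ range (n + 1), (n.choose k : ℝ) * t ^ k :=
        sum_le_sum_of_subset_of_nonneg (range_subset_range.2 (by omega))
          fun k _ _ => by positivity
    _ = (1 + t) ^ n := by
        rw [add_comm 1 t, add_pow]
        exact sum_congr rfl fun k _ => by ring
    _ ≤ Real.exp t ^ n := pow_le_pow_left₀ (by positivity) (by linarith [Real.add_one_le_exp t]) n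
    _ = Real.exp r := by rw [← Real.exp_nat_mul, mul_div_cancel₀ _ hn.ne']
  rw [← le_div_iff₀ (by positivity)] at key
  refine key.trans_eq ?_
  rw [← Real.exp_one_pow, div_pow, div_pow, mul_pow]
  field_simp [t]

namespace EuclideanSpace

variable {ι : Type*} [Fintype ι]

noncomputable def supportedOn (s : Set ι) : Submodule ℝ (EuclideanSpace ℝ ι) :=
  Submodule.span ℝ (PiLp.basisFun 2 ℝ ι '' s)

theorem mem_supportedOn_iff {s : Set ι} {x : EuclideanSpace ℝ ι} :
    x ∈ supportedOn s ↔ Function.support x ⊆ s := by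
  rw [supportedOn, Module.Basis.mem_span_image, ← Finsupp.fun_support_eq]
  rfl

theorem finrank_supportedOn (s : Finset ι) : finrank ℝ (supportedOn (s : Set ι)) = s.card := by
  classical
  rw [supportedOn, finrank_span_set_eq_card ((PiLp.basisFun 2 ℝ ι).linearIndepOn _).id_image,
    Set.toFinset_image, card_image_of_injective _ (PiLp.basisFun 2 ℝ ι).injective,
    toFinset_coe]

theorem exists_sphere_net_supportedOn (s : Finset ι) {ρ : ℝ} (hρ : 0 < ρ) :
    ∃ T : Finset (EuclideanSpace ℝ ι), (∀ y ∈ T, ‖y‖ = 1 ∧ Function.support y ⊆ s) ∧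
      (∀ x : EuclideanSpace ℝ ι, ‖x‖ = 1 → Function.support x ⊆ s → ∃ y ∈ T, ‖x - y‖ ≤ ρ) ∧
      (T.card : ℝ) ≤ (1 + 2 / ρ) ^ s.card := by
  obtain ⟨C, hCA, hcover, hcard⟩ := exists_finset_subset_isCover_card_le
    (Real.toNNReal_pos.2 hρ) zero_le_one
    (sphere_subset_closedBall (x := (0 : supportedOn (s : Set ι))) (ε := 1))
  refine ⟨C.map (Function.Embedding.subtype _), ?_, ?_, ?_⟩
  · simp only [mem_map, Function.Embedding.subtype_apply, forall_exists_index, and_imp]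
    rintro _ y hy rfl
    exact ⟨by simpa using hCA hy, mem_supportedOn_iff.1 y.2⟩
  · intro x hx hxs
    obtain ⟨y, hy, hxy⟩ := hcover (x := ⟨x, mem_supportedOn_iff.2 hxs⟩) (by simpa using hx)
    refine ⟨y, mem_map_of_mem _ hy, ?_⟩
    rw [← dist_eq_norm]
    simpa [edist_le_coe, ← NNReal.coe_le_coe, Real.coe_toNNReal _ hρ.le, Subtype.dist_eq]
      using hxy
  · simpa [finrank_supportedOn, Real.coe_toNNReal _ hρ.le] using hcard

theorem exists_sparse_sphere_net (r : ℕ) {ρ : ℝ} (hρ : 0 < ρ) :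
    ∃ 𝒩 : Finset (EuclideanSpace ℝ ι),
      (∀ y ∈ 𝒩, ‖y‖ = 1 ∧ (Function.support y).ncard ≤ r) ∧
      (∀ x : EuclideanSpace ℝ ι, ‖x‖ = 1 → (Function.support x).ncard ≤ r →
        ∃ y ∈ 𝒩, Function.support y ⊆ Function.support x ∧ ‖x - y‖ ≤ ρ) ∧
      (𝒩.card : ℝ) ≤ (∑ k ∈ range (r + 1), ((Fintype.card ι).choose k : ℝ)) * (1 + 2 / ρ) ^ r := by
  classical
  choose T hT hcover hcard using fun s : Finset ι => exists_sphere_net_supportedOn s hρ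
  set supports : Finset (Finset ι) := {s ∈ univ.powerset | s.card ≤ r}
  refine ⟨supports.biUnion T, ?_, ?_, ?_⟩
  · simp only [mem_biUnion, forall_exists_index, and_imp]
    intro y s hs hy
    obtain ⟨hy1, hys⟩ := hT s y hy
    refine ⟨hy1, (Set.ncard_le_ncard hys).trans ?_⟩
    simpa [supports] using hs
  · intro x hx hxr
    set s := (Function.support x).toFinset
    obtain ⟨y, hy, hxy⟩ := hcover s x hx (by simp [s])
    have hs : s.card ≤ r := by rwa [Set.ncard_eq_toFinset_card'] at hxr
    refine ⟨y, mem_biUnion.2 ⟨s, by simpa [supports] using hs, hy⟩,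
      by simpa [s] using (hT s y hy).2, hxy⟩
  · have h1 : (1 : ℝ) ≤ 1 + 2 / ρ := le_add_of_nonneg_right (by positivity)
    calc (#(supports.biUnion T) : ℝ) ≤ ∑ s ∈ supports, (#(T s) : ℝ) := by
          exact_mod_cast card_biUnion_le
      _ ≤ ∑ s ∈ supports, (1 + 2 / ρ) ^ r := by
          refine sum_le_sum fun s hs => (hcard s).trans (pow_le_pow_right₀ h1 ?_)
          simpa [supports] using hs
      _ = _ := by
          rw [sum_const, nsmul_eq_mul, card_filter_card_le_eq_sum_choose, card_univ]
          push_cast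
          rfl

end EuclideanSpace

/-- Existence of support-preserving ρ-nets on r-sparse unit vectors of controlled cardinality. -/
theorem sparse_support_preserving_net :
    ∃ C : ℝ, 0 < C ∧ ∀ (N r : ℕ) (ρ : ℝ), 0 < ρ → ρ ≤ 1 → r ≤ N →
      ∃ 𝒩 : Finset (EuclideanSpace ℝ (Fin N)),
        (∀ y ∈ 𝒩, ‖y‖ = 1 ∧ (Function.support y).ncard ≤ r) ∧
        (∀ x : EuclideanSpace ℝ (Fin N), ‖x‖ = 1 → (Function.support x).ncard ≤ r →
          ∃ y ∈ 𝒩, Function.support y ⊆ Function.support x ∧ ‖x - y‖ ≤ ρ) ∧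
        (𝒩.card : ℝ) ≤ (C * N / (ρ * r)) ^ r := by
  refine ⟨9, by norm_num, fun N r ρ hρ hρ1 hrN => ?_⟩
  obtain ⟨𝒩, hunit, hcover, hcard⟩ := EuclideanSpace.exists_sparse_sphere_net (ι := Fin N) r hρ
  refine ⟨𝒩, hunit, hcover, hcard.trans ?_⟩
  have hρ3 : 1 + 2 / ρ ≤ 3 / ρ := by
    rw [le_div_iff₀ hρ, add_mul, div_mul_cancel₀ _ hρ.ne']
    linarith
  have he : 3 * Real.exp 1 ≤ 9 := by linarith [Real.exp_one_lt_d9]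
  rw [Fintype.card_fin]
  calc _ ≤ (Real.exp 1 * N / r) ^ r * (3 / ρ) ^ r :=
        mul_le_mul (sum_range_choose_le_exp_mul_div_pow hrN)
          (pow_le_pow_left₀ (by positivity) hρ3 r) (by positivity) (by positivity)
    _ = (3 * Real.exp 1 * N / (ρ * r)) ^ r := by
        rw [← mul_pow]
        ring_nf
    _ ≤ (9 * N / (ρ * r)) ^ r := by gcongr
end

section
/- Let ρ ∈ (0,1], r, h, p, q ∈ ℕ with r ≥ 2, and let 𝒩 be a support-preserving Euclidean ρ-net on the set of h-sparse unit vectors in ℝ^q. Let T be any p×q real matrix. Then sup over h-sparse unit vectors u of the r-th largest coordinate of |Tu| is at most 2 · sup over v ∈ 𝒩 of the ⌊r/2⌋-th largest coordinate of |Tv|, plus (4ρ/√r) · sup over h-sparse unit vectors u of (Σ_{i=1}^{r} (i-th largest coordinate of |Tu|)²)^{1/2}. -/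
/-!
Everything rests on the counting description of order statistics: for `t ≥ 0`, the `m`-th
largest value of `a` is at most `t` iff fewer than `m` values exceed `t`. Counting shows that the
`(k + l - 1)`-th largest value of `a + b` is at most the `k`-th of `a` plus the `l`-th of `b`, and
monotonicity gives `j · a₍ⱼ₎² ≤ ∑_{i ≤ r} a₍ᵢ₎²`, so `a₍ⱼ₎ ≤ (2 / √r) (∑_{i ≤ r} a₍ᵢ₎²)^{1/2}`
as soon as `r ≤ 4j`.

Given a sparse unit vector `u`, take `v` in the net. As `supp v ⊆ supp u`, the difference `u - v`
is supported in `supp u`, so `(u - v) / ‖u - v‖` is again a sparse unit vector. Splitting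
`|Tu| ≤ |Tv| + |T(u - v)|` with `r = ⌊r/2⌋ + (r - ⌊r/2⌋ + 1) - 1` bounds the `r`-th largest entry
of `|Tu|` by the `⌊r/2⌋`-th of `|Tv|` plus `‖u - v‖ ≤ ρ` times `2 / √r` times the supremum of
the top-`r` `ℓ²` norms.
-/

noncomputable section

/-- The `m`-th largest value (1-based) among the values of `a`. -/
noncomputable def kthLargest {ι : Type*} [Fintype ι] (a : ι → ℝ) (m : ℕ) : ℝ :=
  (((Finset.univ.val.map a).sort (· ≤ ·)).reverse).getD (m - 1) 0

open Finset Matrix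

theorem List.Pairwise.lt_getElem_iff_lt_countP {α : Type*} [LinearOrder α] {l : List α}
    (hl : l.Pairwise (· ≥ ·)) (t : α) {k : ℕ} (hk : k < l.length) :
    t < l[k] ↔ k < l.countP (t < ·) := by
  induction l generalizing k with
  | nil => simp at hk
  | cons x l ih =>
    rw [List.pairwise_cons] at hl
    by_cases hx : t < x
    · cases k with
      | zero => simp [hx]
      | succ k => simp [ih hl.2 (k := k) (by simpa using hk), hx]
    · have hzero : l.countP (t < ·) = 0 :=
        List.countP_eq_zero.mpr fun y hy => by simpa using (hl.1 y hy).trans (not_lt.mp hx)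
      cases k with
      | zero => simp [hx, hzero]
      | succ k => simp [ih hl.2 (k := k) (by simpa using hk), hx, hzero]

section kthLargest

variable {ι : Type*} [Fintype ι]

lemma kthLargest_le_iff (a : ι → ℝ) (m : ℕ) {t : ℝ} (ht : 0 ≤ t) :
    kthLargest a m ≤ t ↔ #{i | t < a i} ≤ m - 1 := by
  set l := ((Finset.univ.val.map a).sort (· ≤ ·)).reverse
  have hsorted : l.Pairwise (· ≥ ·) := List.pairwise_reverse.mpr (Multiset.pairwise_sort _ _)
  have hcount : l.countP (t < ·) = #{i | t < a i} := by
    rw [List.countP_reverse, ← Multiset.coe_countP, Multiset.sort_eq, Multiset.countP_map,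
      Finset.card_def, Finset.filter_val]
  have hlen : l.length = Fintype.card ι := by simp [l]
  unfold kthLargest
  rw [← hcount]
  by_cases hm : m - 1 < l.length
  · rw [List.getD_eq_getElem _ _ hm, ← not_lt, hsorted.lt_getElem_iff_lt_countP t hm, not_lt]
  · rw [List.getD_eq_default _ _ (not_lt.mp hm)]
    exact iff_of_true ht ((List.countP_le_length).trans (not_lt.mp hm))

lemma kthLargest_nonneg {a : ι → ℝ} (ha : 0 ≤ a) (m : ℕ) : 0 ≤ kthLargest a m := by
  unfold kthLargest
  rw [List.getD_eq_getElem?_getD]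
  cases h : (((Finset.univ.val.map a).sort (· ≤ ·)).reverse)[m - 1]? with
  | none => exact le_rfl
  | some x =>
    obtain ⟨i, -, rfl⟩ := by simpa using List.mem_of_getElem? h
    exact ha i

lemma kthLargest_le_of_le {a : ι → ℝ} {C : ℝ} (hC : 0 ≤ C) (h : a ≤ fun _ => C) (m : ℕ) :
    kthLargest a m ≤ C := by
  simp [kthLargest_le_iff a m hC, Finset.filter_false_of_mem fun i _ => not_lt.mpr (h i)]

lemma kthLargest_antitone {a : ι → ℝ} (ha : 0 ≤ a) : Antitone (kthLargest a) := fun m m' hmm' =>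
  (kthLargest_le_iff a m' (kthLargest_nonneg ha m)).mpr <|
    ((kthLargest_le_iff a m (kthLargest_nonneg ha m)).mp le_rfl).trans (Nat.sub_le_sub_right hmm' 1)

lemma kthLargest_const_mul_le {a : ι → ℝ} (ha : 0 ≤ a) {c : ℝ} (hc : 0 ≤ c) (m : ℕ) :
    kthLargest (fun i => c * a i) m ≤ c * kthLargest a m := by
  rw [kthLargest_le_iff _ m (mul_nonneg hc (kthLargest_nonneg ha m))]
  refine (card_le_card fun i => ?_).trans ((kthLargest_le_iff a m (kthLargest_nonneg ha m)).mp le_rfl)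
  simp only [mem_filter, mem_univ, true_and]
  exact fun h => lt_of_mul_lt_mul_left h hc

lemma kthLargest_le_add {a b c : ι → ℝ} (ha : 0 ≤ a) (hb : 0 ≤ b) (hc : c ≤ a + b) {m n : ℕ}
    (hm : 1 ≤ m) (hn : 1 ≤ n) :
    kthLargest c (m + n - 1) ≤ kthLargest a m + kthLargest b n := by
  classical
  have hsa := (kthLargest_le_iff a m (kthLargest_nonneg ha m)).mp le_rfl
  have hsb := (kthLargest_le_iff b n (kthLargest_nonneg hb n)).mp le_rfl
  rw [kthLargest_le_iff _ _ (add_nonneg (kthLargest_nonneg ha m) (kthLargest_nonneg hb n))]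
  calc #{i | kthLargest a m + kthLargest b n < c i}
      ≤ #(({i | kthLargest a m < a i} : Finset ι) ∪ ({i | kthLargest b n < b i} : Finset ι)) := by
        refine card_le_card fun i => ?_
        simp only [mem_filter, mem_union, mem_univ, true_and]
        contrapose!
        exact fun h => (hc i).trans (add_le_add h.1 h.2)
    _ ≤ _ := card_union_le _ _
    _ ≤ m + n - 1 - 1 := by omega

lemma natCast_mul_kthLargest_sq_le_sum {a : ι → ℝ} (ha : 0 ≤ a) (j : ℕ) :
    j * kthLargest a j ^ 2 ≤ ∑ i ∈ Icc 1 j, kthLargest a i ^ 2 := by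
  calc (j : ℝ) * kthLargest a j ^ 2 = ∑ _i ∈ Icc 1 j, kthLargest a j ^ 2 := by simp
    _ ≤ ∑ i ∈ Icc 1 j, kthLargest a i ^ 2 := by
      gcongr with i hi
      · exact kthLargest_nonneg ha j
      · exact kthLargest_antitone ha (mem_Icc.mp hi).2

lemma sqrt_mul_kthLargest_le {a : ι → ℝ} (ha : 0 ≤ a) {j r : ℕ} (hjr : j ≤ r) (hrj : r ≤ 4 * j) :
    √r * kthLargest a j ≤ 2 * √(∑ i ∈ Icc 1 r, kthLargest a i ^ 2) := by
  have hj : j * kthLargest a j ^ 2 ≤ ∑ i ∈ Icc 1 r, kthLargest a i ^ 2 :=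
    (natCast_mul_kthLargest_sq_le_sum ha j).trans <|
      sum_le_sum_of_subset_of_nonneg (Icc_subset_Icc_right hjr) fun _ _ _ => sq_nonneg _
  have hrj' : (r : ℝ) ≤ 4 * j := by exact_mod_cast hrj
  rw [← Real.sqrt_sq (kthLargest_nonneg ha j), ← Real.sqrt_mul (Nat.cast_nonneg r),
    show (2 : ℝ) = √4 by rw [show (4 : ℝ) = 2 ^ 2 by norm_num, Real.sqrt_sq zero_le_two],
    ← Real.sqrt_mul zero_le_four]
  apply Real.sqrt_le_sqrt
  nlinarith [sq_nonneg (kthLargest a j)]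

end kthLargest

section SparseUnitVectors

variable {m n : Type*} [Fintype m] [Fintype n]

abbrev SparseUnitVector (n : Type*) [Fintype n] (h : ℕ) :=
  {u : EuclideanSpace ℝ n // ‖u‖ = 1 ∧ (Function.support u).ncard ≤ h}

lemma ncard_support_sub_le_of_support_subset {u v : EuclideanSpace ℝ n}
    (hvu : Function.support v ⊆ Function.support u) :
    (Function.support (u - v)).ncard ≤ (Function.support u).ncard := by
  refine Set.ncard_le_ncard ?_ (Set.toFinite _)
  rw [WithLp.ofLp_sub]
  exact (Function.support_sub _ _).trans (Set.union_subset le_rfl hvu)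

lemma exists_abs_mulVec_apply_le (T : Matrix m n ℝ) :
    ∃ C, 0 ≤ C ∧ ∀ (x : EuclideanSpace ℝ n) i, |(T *ᵥ x) i| ≤ C * ‖x‖ := by
  classical
  let L := LinearMap.toContinuousLinearMap (toLpLin 2 2 T)
  refine ⟨‖L‖, norm_nonneg _, fun x i => ?_⟩
  simpa [L, toLpLin_apply] using (PiLp.norm_apply_le (L x) i).trans (L.le_opNorm x)

lemma kthLargest_abs_mulVec_le_add (T : Matrix m n ℝ) (u v : EuclideanSpace ℝ n) {k l : ℕ}
    (hk : 1 ≤ k) (hl : 1 ≤ l) :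
    kthLargest (fun i => |(T *ᵥ u) i|) (k + l - 1) ≤
      kthLargest (fun i => |(T *ᵥ v) i|) k + kthLargest (fun i => |(T *ᵥ (u - v)) i|) l := by
  refine kthLargest_le_add (fun _ => abs_nonneg _) (fun _ => abs_nonneg _) (fun i => ?_) hk hl
  simp only [mulVec_sub, Pi.add_apply, Pi.sub_apply]
  linarith [abs_sub_abs_le_abs_sub ((T *ᵥ u) i) ((T *ᵥ v) i)]

lemma exists_kthLargest_abs_mulVec_le (T : Matrix m n ℝ) :
    ∃ C, ∀ x : EuclideanSpace ℝ n, ‖x‖ ≤ 1 → ∀ j,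
      kthLargest (fun i => |(T *ᵥ x) i|) j ≤ C := by
  obtain ⟨C, hC, hT⟩ := exists_abs_mulVec_apply_le T
  exact ⟨C, fun x hx j => kthLargest_le_of_le hC
    (fun i => (hT x i).trans (mul_le_of_le_one_right hC hx)) j⟩

lemma bddAbove_range_sqrt_sum_kthLargest_abs_mulVec (T : Matrix m n ℝ) (h r : ℕ) :
    BddAbove (Set.range fun u : SparseUnitVector n h =>
      √(∑ i ∈ Icc 1 r, kthLargest (fun l => |(T *ᵥ u.1) l|) i ^ 2)) := by
  obtain ⟨C, hT⟩ := exists_kthLargest_abs_mulVec_le T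
  refine ⟨√(∑ _i ∈ Icc 1 r, C ^ 2), Set.forall_mem_range.mpr fun u => ?_⟩
  gcongr with i
  · exact kthLargest_nonneg (fun _ => abs_nonneg _) i
  · exact hT u.1 u.2.1.le i

lemma sqrt_mul_kthLargest_abs_mulVec_le (T : Matrix m n ℝ) {h j r : ℕ} {x : EuclideanSpace ℝ n}
    (hx : (Function.support x).ncard ≤ h) (hjr : j ≤ r) (hrj : r ≤ 4 * j) :
    √r * kthLargest (fun i => |(T *ᵥ x) i|) j ≤ 2 * ‖x‖ *
      ⨆ u : SparseUnitVector n h, √(∑ i ∈ Icc 1 r, kthLargest (fun l => |(T *ᵥ u.1) l|) i ^ 2) := by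
  set S := ⨆ u : SparseUnitVector n h, √(∑ i ∈ Icc 1 r, kthLargest (fun l => |(T *ᵥ u.1) l|) i ^ 2)
  rcases eq_or_ne x 0 with rfl | hx0
  · have : kthLargest (fun i => |(T *ᵥ (0 : EuclideanSpace ℝ n)) i|) j ≤ 0 :=
      kthLargest_le_of_le le_rfl (fun i => by simp) j
    simpa using mul_nonpos_of_nonneg_of_nonpos (Real.sqrt_nonneg r) this
  set w : EuclideanSpace ℝ n := ‖x‖⁻¹ • x
  have hw : ‖w‖ = 1 ∧ (Function.support w).ncard ≤ h := by
    refine ⟨by simp [w, norm_smul, hx0], ?_⟩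
    rwa [WithLp.ofLp_smul, Function.support_const_smul_of_ne_zero _ _ (by simpa using hx0)]
  have hTx : (fun i => |(T *ᵥ x) i|) = fun i => ‖x‖ * |(T *ᵥ w) i| := by
    ext i
    simp [w, mulVec_smul, abs_mul, hx0]
  calc √r * kthLargest (fun i => |(T *ᵥ x) i|) j
      ≤ √r * (‖x‖ * kthLargest (fun i => |(T *ᵥ w) i|) j) := by
        rw [hTx]
        gcongr
        exact kthLargest_const_mul_le (fun _ => abs_nonneg _) (norm_nonneg x) j
    _ = ‖x‖ * (√r * kthLargest (fun i => |(T *ᵥ w) i|) j) := by ring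
    _ ≤ ‖x‖ * (2 * S) := by
        refine mul_le_mul_of_nonneg_left ?_ (norm_nonneg x)
        exact (sqrt_mul_kthLargest_le (fun _ => abs_nonneg _) hjr hrj).trans <|
          mul_le_mul_of_nonneg_left
            (le_ciSup (bddAbove_range_sqrt_sum_kthLargest_abs_mulVec T h r) ⟨w, hw⟩) zero_le_two
    _ = 2 * ‖x‖ * S := by ring

end SparseUnitVectors

theorem order_statistics_net_general {p q : ℕ} (r h : ℕ) (hr : 2 ≤ r)
    (ρ : ℝ) (hρ0 : 0 < ρ)
    (T : Matrix (Fin p) (Fin q) ℝ)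
    (𝒩 : Set (EuclideanSpace ℝ (Fin q)))
    (h𝒩 : ∀ v ∈ 𝒩, ‖v‖ = 1 ∧ (Function.support v).ncard ≤ h)
    (hnet : ∀ u : EuclideanSpace ℝ (Fin q), ‖u‖ = 1 → (Function.support u).ncard ≤ h →
      ∃ v ∈ 𝒩, Function.support v ⊆ Function.support u ∧ ‖u - v‖ ≤ ρ) :
    (⨆ u : {u : EuclideanSpace ℝ (Fin q) // ‖u‖ = 1 ∧ (Function.support u).ncard ≤ h},
        kthLargest (fun i : Fin p => |T.mulVec (fun j => u.1 j) i|) r)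
      ≤ 2 * (⨆ v : 𝒩, kthLargest (fun i : Fin p => |T.mulVec (fun j => v.1 j) i|) (r / 2))
        + (4 * ρ / Real.sqrt r) *
          ⨆ u : {u : EuclideanSpace ℝ (Fin q) // ‖u‖ = 1 ∧ (Function.support u).ncard ≤ h},
            Real.sqrt (∑ i ∈ Finset.Icc 1 r,
              (kthLargest (fun l : Fin p => |T.mulVec (fun j => u.1 j) l|) i) ^ 2) := by
  set S₁ := ⨆ v : 𝒩, kthLargest (fun i : Fin p => |T.mulVec (fun j => v.1 j) i|) (r / 2)
  set S₂ := ⨆ u : SparseUnitVector (Fin q) h,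
    √(∑ i ∈ Icc 1 r, kthLargest (fun l : Fin p => |T.mulVec (fun j => u.1 j) l|) i ^ 2)
  obtain ⟨C, hT⟩ := exists_kthLargest_abs_mulVec_le T
  have hS₁ : 0 ≤ S₁ := Real.iSup_nonneg fun v => kthLargest_nonneg (fun i => abs_nonneg _) _
  have hS₂ : 0 ≤ S₂ := Real.iSup_nonneg fun u => Real.sqrt_nonneg _
  have hr₀ : 0 < √r := Real.sqrt_pos.mpr (by positivity)
  refine Real.iSup_le (fun u => ?_) (by positivity)
  obtain ⟨v, hv𝒩, hsupp, hdist⟩ := hnet u.1 u.2.1 u.2.2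
  have hsupp' : (Function.support (u.1 - v)).ncard ≤ h :=
    (ncard_support_sub_le_of_support_subset hsupp).trans u.2.2
  have hv : kthLargest (fun i => |(T *ᵥ v) i|) (r / 2) ≤ S₁ :=
    le_ciSup (f := fun v : 𝒩 => kthLargest (fun i => |(T *ᵥ v.1) i|) (r / 2))
      ⟨C, Set.forall_mem_range.mpr fun v => hT v.1 (h𝒩 v.1 v.2).1.le _⟩ ⟨v, hv𝒩⟩
  have huv := sqrt_mul_kthLargest_abs_mulVec_le T hsupp' (j := r - r / 2 + 1) (r := r)
    (by omega) (by omega)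
  calc kthLargest (fun i => |(T *ᵥ u.1) i|) r
      ≤ kthLargest (fun i => |(T *ᵥ v) i|) (r / 2) +
          kthLargest (fun i => |(T *ᵥ (u.1 - v)) i|) (r - r / 2 + 1) :=
        (kthLargest_abs_mulVec_le_add T u.1 v (by omega) (by omega)).trans_eq' (by congr 1; omega)
    _ ≤ S₁ + 2 * ρ / √r * S₂ := by
        gcongr
        rw [div_mul_eq_mul_div, le_div_iff₀' hr₀]
        exact huv.trans (by gcongr)
    _ ≤ 2 * S₁ + 4 * ρ / √r * S₂ := by
        gcongr
        · linarith
        · norm_num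

/-- Passing from the supremum of order statistics over sparse unit vectors to a
support-preserving net. -/
theorem order_statistics_net {p q : ℕ} (r h : ℕ) (hr : 2 ≤ r)
    (ρ : ℝ) (hρ0 : 0 < ρ) (hρ1 : ρ ≤ 1)
    (T : Matrix (Fin p) (Fin q) ℝ)
    (𝒩 : Set (EuclideanSpace ℝ (Fin q)))
    (h𝒩 : ∀ v ∈ 𝒩, ‖v‖ = 1 ∧ (Function.support v).ncard ≤ h)
    (hnet : ∀ u : EuclideanSpace ℝ (Fin q), ‖u‖ = 1 → (Function.support u).ncard ≤ h →
      ∃ v ∈ 𝒩, Function.support v ⊆ Function.support u ∧ ‖u - v‖ ≤ ρ) :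
    (⨆ u : {u : EuclideanSpace ℝ (Fin q) // ‖u‖ = 1 ∧ (Function.support u).ncard ≤ h},
        kthLargest (fun i : Fin p => |T.mulVec (fun j => u.1 j) i|) r)
      ≤ 2 * (⨆ v : 𝒩, kthLargest (fun i : Fin p => |T.mulVec (fun j => v.1 j) i|) (r / 2))
        + (4 * ρ / Real.sqrt r) *
          ⨆ u : {u : EuclideanSpace ℝ (Fin q) // ‖u‖ = 1 ∧ (Function.support u).ncard ≤ h},
            Real.sqrt (∑ i ∈ Finset.Icc 1 r,
              (kthLargest (fun l : Fin p => |T.mulVec (fun j => u.1 j) l|) i) ^ 2) :=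
  order_statistics_net_general r h hr ρ hρ0 T 𝒩 h𝒩 hnet
end
end
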